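/- arXiv:2304.14584 — 5 statements merged into one kernel-verified Lean document; each statement's English description precedes it below -/
import Mathlib

section
/- Let u, v, h₀ : ℝ → ℝ satisfy u' = -τu + fv - h_x/F², v' = -fu - τv - h_y/F², and h₀' = -h_x u - h_y v, with τ > 0. Then h₀(t)/t → τ(h_x² + h_y²)/(F²(f² + τ²)) as t → ∞; i.e., the free surface height offset grows asymptotically linearly at rate τ(h_x² + h_y²)/(F²(f² + τ²)). -/
/-!
Shifting `(u, v)` by the steady state `(u₀, v₀)` of the forced system leaves a damped inertial
rotation: the Coriolis terms do no work, so its energy `(u - u₀)² + (v - v₀)²` decays like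
`exp (-2τt)`. Hence `h₀' = -h_x u - h_y v` converges to `τ (h_x² + h_y²) / (F² (f² + τ²))`, and a
function whose derivative has a limit at infinity grows asymptotically linearly with that slope.
-/

open Filter Topology Real Asymptotics

theorem isLittleO_id_of_hasDerivAt_tendsto_zero {g g' : ℝ → ℝ}
    (hg : ∀ t, HasDerivAt g (g' t) t) (hg' : Tendsto g' atTop (𝓝 0)) :
    g =o[atTop] id := by
  refine isLittleO_iff.2 fun c hc => ?_
  obtain ⟨T, hT⟩ := eventually_atTop.1
    ((hg'.eventually (Metric.closedBall_mem_nhds 0 (half_pos hc))).and (eventually_ge_atTop 0))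
  have hT₀ : 0 ≤ T := (hT T le_rfl).2
  have hlip : ∀ t ≥ T, ‖g t - g T‖ ≤ c / 2 * ‖t - T‖ := fun t ht =>
    (convex_Ici T).norm_image_sub_le_of_norm_hasDerivWithin_le
      (fun s _ => (hg s).hasDerivWithinAt) (fun s hs => by simpa using (hT s hs).1)
      Set.self_mem_Ici ht
  filter_upwards [eventually_ge_atTop T, eventually_ge_atTop (2 * ‖g T‖ / c)] with t hTt hgt
  have hgT : 2 * ‖g T‖ ≤ t * c := (div_le_iff₀ hc).1 hgt
  have hstep := hlip t hTt
  rw [Real.norm_of_nonneg (sub_nonneg.2 hTt)] at hstep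
  calc ‖g t‖ ≤ ‖g T‖ + ‖g t - g T‖ := norm_le_norm_add_norm_sub' _ _
    _ ≤ c * ‖id t‖ := by
      rw [id, Real.norm_of_nonneg (hT₀.trans hTt)]; nlinarith

theorem tendsto_div_self_of_hasDerivAt_tendsto {h h' : ℝ → ℝ} {L : ℝ}
    (hh : ∀ t, HasDerivAt h (h' t) t) (hL : Tendsto h' atTop (𝓝 L)) :
    Tendsto (fun t => h t / t) atTop (𝓝 L) := by
  have hlo : (fun t => h t - L * t) =o[atTop] id :=
    isLittleO_id_of_hasDerivAt_tendsto_zero (fun t => (hh t).sub ((hasDerivAt_id t).const_mul L))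
      (by simpa using hL.sub_const L)
  have hslope : Tendsto (fun t => (h t - L * t) / t + L) atTop (𝓝 L) := by
    simpa using hlo.tendsto_div_nhds_zero.add_const L
  refine hslope.congr' ?_
  filter_upwards [eventually_ne_atTop 0] with t ht
  field_simp
  ring

theorem eq_mul_exp_of_hasDerivAt_mul {r : ℝ → ℝ} {c : ℝ} (hr : ∀ t, HasDerivAt r (c * r t) t)
    (t : ℝ) : r t = r 0 * exp (c * t) := by
  have hconst : ∀ s, HasDerivAt (fun s => r s * exp (-c * s)) 0 s := fun s => by
    have hexp : HasDerivAt (fun s => exp (-c * s)) (exp (-c * s) * (-c * 1)) s :=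
      ((hasDerivAt_id' s).const_mul (-c)).exp
    exact ((hr s).mul hexp).congr_deriv (by ring)
  have := is_const_of_deriv_eq_zero (fun s => (hconst s).differentiableAt)
    (fun s => (hconst s).deriv) t 0
  rw [mul_zero, exp_zero, mul_one] at this
  rw [← this, mul_assoc, ← exp_add, neg_mul, neg_add_cancel, exp_zero, mul_one]

theorem tendsto_zero_of_hasDerivAt_mul {r : ℝ → ℝ} {c : ℝ} (hc : c < 0)
    (hr : ∀ t, HasDerivAt r (c * r t) t) : Tendsto r atTop (𝓝 0) := by
  have := (tendsto_exp_atBot.comp (tendsto_id.const_mul_atTop_of_neg hc)).const_mul (r 0)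
  rw [mul_zero] at this
  exact this.congr fun t => (eq_mul_exp_of_hasDerivAt_mul hr t).symm

theorem tendsto_zero_of_damped_rotation {τ f : ℝ} {U V : ℝ → ℝ} (hτ : 0 < τ)
    (hU : ∀ t, HasDerivAt U (-τ * U t + f * V t) t)
    (hV : ∀ t, HasDerivAt V (-f * U t - τ * V t) t) :
    Tendsto U atTop (𝓝 0) ∧ Tendsto V atTop (𝓝 0) := by
  have hE : Tendsto (fun t => U t ^ 2 + V t ^ 2) atTop (𝓝 0) :=
    tendsto_zero_of_hasDerivAt_mul (c := -2 * τ) (by linarith) fun t =>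
      (((hU t).pow 2).add ((hV t).pow 2)).congr_deriv (by ring)
  have hsqrt : Tendsto (fun t => √(U t ^ 2 + V t ^ 2)) atTop (𝓝 0) := by
    simpa using hE.sqrt
  exact ⟨squeeze_zero_norm (fun t => abs_le_sqrt (le_add_of_nonneg_right (sq_nonneg (V t)))) hsqrt,
    squeeze_zero_norm (fun t => abs_le_sqrt (le_add_of_nonneg_left (sq_nonneg (U t)))) hsqrt⟩

theorem tendsto_steadyState_of_forced_damped_rotation {τ f a b : ℝ} {u v : ℝ → ℝ} (hτ : 0 < τ)
    (hu : ∀ t, HasDerivAt u (-τ * u t + f * v t - a) t)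
    (hv : ∀ t, HasDerivAt v (-f * u t - τ * v t - b) t) :
    Tendsto u atTop (𝓝 (-(τ * a + f * b) / (f ^ 2 + τ ^ 2))) ∧
      Tendsto v atTop (𝓝 ((f * a - τ * b) / (f ^ 2 + τ ^ 2))) := by
  set u₀ := -(τ * a + f * b) / (f ^ 2 + τ ^ 2)
  set v₀ := (f * a - τ * b) / (f ^ 2 + τ ^ 2)
  have hU : ∀ t, HasDerivAt (fun t => u t - u₀) (-τ * (u t - u₀) + f * (v t - v₀)) t :=
    fun t => (hu t).sub_const u₀ |>.congr_deriv (by simp only [u₀, v₀]; field_simp; ring)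
  have hV : ∀ t, HasDerivAt (fun t => v t - v₀) (-f * (u t - u₀) - τ * (v t - v₀)) t :=
    fun t => (hv t).sub_const v₀ |>.congr_deriv (by simp only [u₀, v₀]; field_simp; ring)
  obtain ⟨hU₀, hV₀⟩ := tendsto_zero_of_damped_rotation hτ hU hV
  exact ⟨by simpa using hU₀.add_const u₀, by simpa using hV₀.add_const v₀⟩

theorem stmt_2 (τ f F hx hy : ℝ) (hτ : 0 < τ) (hF : F ≠ 0) (u v h0 : ℝ → ℝ)
    (hu : ∀ t : ℝ, HasDerivAt u (-τ * u t + f * v t - hx / F ^ 2) t)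
    (hv : ∀ t : ℝ, HasDerivAt v (-f * u t - τ * v t - hy / F ^ 2) t)
    (hh : ∀ t : ℝ, HasDerivAt h0 (-hx * u t - hy * v t) t) :
    Filter.Tendsto (fun t => h0 t / t) Filter.atTop
      (nhds (τ * (hx ^ 2 + hy ^ 2) / (F ^ 2 * (f ^ 2 + τ ^ 2)))) := by
  obtain ⟨hu_lim, hv_lim⟩ := tendsto_steadyState_of_forced_damped_rotation hτ hu hv
  refine tendsto_div_self_of_hasDerivAt_tendsto hh ?_
  convert (hu_lim.const_mul (-hx)).sub (hv_lim.const_mul hy) using 2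
  field_simp
  ring
end

section
/- For the matrix A with rows (-τ, f, 0), (-f, -τ, 0), (-h_x, -h_y, 0) and f² + τ² ≠ 0, the (3,1) entry of e^{At} equals [(-f h_y + h_x τ) e^{-τt} cos(ft) + (-f h_x - h_y τ) e^{-τt} sin(ft) + f h_y - h_x τ]/(f² + τ²) for all real t. -/
/-!
The exponential is `exp (t • A) = 1 + (e^{-τt} cos (f t) - 1) • C + e^{-τt} sin (f t) • S`, where
`A * C = A`, `A * S = -f • C - τ • S` and `A = -τ • C + f • S`: `1 - C` is the spectral projector
onto `ker A` and `C`, `S` play the roles of `1` and `i` on the invariant plane of the eigenvalues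
`-τ ± i f`. The right-hand side solves `E' = A E`, `E 0 = 1`, hence equals `exp (t • A)` by
uniqueness. (`A`, `C`, `S` are `system`, `cosCoeff`, `sinCoeff` below.)
-/

theorem eq_exp_smul_of_hasDerivAt {𝔸 : Type*} [NormedRing 𝔸] [NormedAlgebra ℝ 𝔸]
    [CompleteSpace 𝔸] {A : 𝔸} {E : ℝ → 𝔸} (hE : ∀ s, HasDerivAt E (A * E s) s) (h0 : E 0 = 1)
    (t : ℝ) : E t = NormedSpace.exp (t • A) := by
  -- `s ↦ exp ((t - s) • A) * E s` is constant, with value `exp (t • A)` at `0` and `E t` at `t`.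
  have hconst : ∀ s, HasDerivAt (fun s => NormedSpace.exp ((t - s) • A) * E s) 0 s := by
    intro s
    have hexp : HasDerivAt (fun s : ℝ => NormedSpace.exp ((t - s) • A))
        (-(A * NormedSpace.exp ((t - s) • A))) s := by
      simpa [Function.comp_def] using
        (hasDerivAt_exp_smul_const' A (t - s)).scomp s ((hasDerivAt_id s).const_sub t)
    refine (hexp.mul (hE s)).congr_deriv ?_
    rw [← mul_assoc, ((Commute.refl A).smul_right (t - s)).exp_right.eq]
    noncomm_ring
  simpa [h0] using is_const_of_deriv_eq_zero (fun s => (hconst s).differentiableAt)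
    (fun s => (hconst s).deriv) t 0

theorem Real.hasDerivAt_exp_mul_mul_cos (a b s : ℝ) :
    HasDerivAt (fun s => Real.exp (a * s) * Real.cos (b * s))
      (a * (Real.exp (a * s) * Real.cos (b * s)) - b * (Real.exp (a * s) * Real.sin (b * s))) s := by
  refine (((hasDerivAt_id' s).const_mul a).exp.fun_mul
    ((hasDerivAt_id' s).const_mul b).cos).congr_deriv ?_
  ring

theorem Real.hasDerivAt_exp_mul_mul_sin (a b s : ℝ) :
    HasDerivAt (fun s => Real.exp (a * s) * Real.sin (b * s))
      (b * (Real.exp (a * s) * Real.cos (b * s)) + a * (Real.exp (a * s) * Real.sin (b * s))) s := by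
  refine (((hasDerivAt_id' s).const_mul a).exp.fun_mul
    ((hasDerivAt_id' s).const_mul b).sin).congr_deriv ?_
  ring

namespace ShallowWater

variable (τ f hx hy : ℝ)

def system : Matrix (Fin 3) (Fin 3) ℝ := !![-τ, f, 0; -f, -τ, 0; -hx, -hy, 0]

noncomputable def cosCoeff : Matrix (Fin 3) (Fin 3) ℝ :=
  !![1, 0, 0; 0, 1, 0; (hx * τ - f * hy) / (f ^ 2 + τ ^ 2), (f * hx + τ * hy) / (f ^ 2 + τ ^ 2), 0]

noncomputable def sinCoeff : Matrix (Fin 3) (Fin 3) ℝ :=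
  !![0, 1, 0; -1, 0, 0; -(f * hx + τ * hy) / (f ^ 2 + τ ^ 2), (hx * τ - f * hy) / (f ^ 2 + τ ^ 2), 0]

noncomputable def expSolution (t : ℝ) : Matrix (Fin 3) (Fin 3) ℝ :=
  1 + (Real.exp (-τ * t) * Real.cos (f * t) - 1) • cosCoeff τ f hx hy
    + (Real.exp (-τ * t) * Real.sin (f * t)) • sinCoeff τ f hx hy

variable {τ f}

theorem system_mul_cosCoeff : system τ f hx hy * cosCoeff τ f hx hy = system τ f hx hy := by
  ext i j
  fin_cases i <;> fin_cases j <;> simp [system, cosCoeff, Matrix.mul_apply, Fin.sum_univ_succ]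

theorem system_eq_smul_add_smul (hΔ : f ^ 2 + τ ^ 2 ≠ 0) :
    system τ f hx hy = -τ • cosCoeff τ f hx hy + f • sinCoeff τ f hx hy := by
  ext i j
  fin_cases i <;> fin_cases j <;> simp [system, cosCoeff, sinCoeff] <;> field_simp <;> ring

theorem system_mul_sinCoeff (hΔ : f ^ 2 + τ ^ 2 ≠ 0) :
    system τ f hx hy * sinCoeff τ f hx hy = -f • cosCoeff τ f hx hy - τ • sinCoeff τ f hx hy := by
  ext i j
  fin_cases i <;> fin_cases j <;>
    simp [system, cosCoeff, sinCoeff, Matrix.mul_apply, Fin.sum_univ_succ] <;> field_simp <;> ring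

theorem expSolution_zero : expSolution τ f hx hy 0 = 1 := by
  simp [expSolution]

theorem expSolution_apply_two_zero (t : ℝ) :
    expSolution τ f hx hy t 2 0 =
      (Real.exp (-τ * t) * Real.cos (f * t) - 1) * ((hx * τ - f * hy) / (f ^ 2 + τ ^ 2))
        + Real.exp (-τ * t) * Real.sin (f * t) * (-(f * hx + τ * hy) / (f ^ 2 + τ ^ 2)) := by
  simp [expSolution, cosCoeff, sinCoeff]

section

-- Any matrix norm would do: it only serves to differentiate, and `NormedSpace.exp` does not depend
-- on it.
attribute [local instance] Matrix.linftyOpNormedRing Matrix.linftyOpNormedAlgebra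

theorem hasDerivAt_expSolution (hΔ : f ^ 2 + τ ^ 2 ≠ 0) (s : ℝ) :
    HasDerivAt (expSolution τ f hx hy) (system τ f hx hy * expSolution τ f hx hy s) s := by
  have hu := ((Real.hasDerivAt_exp_mul_mul_cos (-τ) f s).sub_const 1).smul_const
    (cosCoeff τ f hx hy)
  have hv := (Real.hasDerivAt_exp_mul_mul_sin (-τ) f s).smul_const (sinCoeff τ f hx hy)
  refine ((hu.const_add 1).add hv).congr_deriv ?_
  rw [expSolution, mul_add, mul_add, mul_one, mul_smul_comm, mul_smul_comm, system_mul_cosCoeff,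
    system_mul_sinCoeff hx hy hΔ, system_eq_smul_add_smul hx hy hΔ]
  module

theorem exp_smul_system (hΔ : f ^ 2 + τ ^ 2 ≠ 0) (t : ℝ) :
    NormedSpace.exp (t • system τ f hx hy) = expSolution τ f hx hy t :=
  (eq_exp_smul_of_hasDerivAt (hasDerivAt_expSolution hx hy hΔ) (expSolution_zero hx hy) t).symm

end

end ShallowWater

open Matrix

theorem stmt_4 (τ f hx hy : ℝ) (hfτ : f ^ 2 + τ ^ 2 ≠ 0) :
    ∀ t : ℝ,
      (NormedSpace.exp (t • (!![-τ, f, 0; -f, -τ, 0; -hx, -hy, 0] : Matrix (Fin 3) (Fin 3) ℝ))) 2 0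
        = ((-f * hy + hx * τ) * Real.exp (-τ * t) * Real.cos (f * t)
            + (-f * hx - hy * τ) * Real.exp (-τ * t) * Real.sin (f * t)
            + f * hy - hx * τ) / (f ^ 2 + τ ^ 2) := by
  intro t
  rw [show !![-τ, f, 0; -f, -τ, 0; -hx, -hy, 0] = ShallowWater.system τ f hx hy from rfl,
    ShallowWater.exp_smul_system hx hy hfτ, ShallowWater.expSolution_apply_two_zero]
  field_simp
  ring
end

section
/- On the interval [0, π/(2f)), the functions u(x,y,t) = f y - τ x, v(x,y,t) = (τ x - f y) tan(ft), h(x,y,t) = h₀ e^{τt} sec(ft) satisfy the rotating shallow water equations with flat bottom: ∂u/∂t + u ∂u/∂x + v ∂u/∂y + (1/F²) ∂h/∂x - f v + τ u = 0, ∂v/∂t + u ∂v/∂x + v ∂v/∂y + (1/F²) ∂h/∂y + f u + τ v = 0, and ∂h/∂t + ∂(uh)/∂x + ∂(vh)/∂y = 0. -/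
noncomputable def u5 (f τ : ℝ) (x y t : ℝ) : ℝ := f * y - τ * x
noncomputable def v5 (f τ : ℝ) (x y t : ℝ) : ℝ := (τ * x - f * y) * Real.tan (f * t)
noncomputable def h5 (f τ h0 : ℝ) (x y t : ℝ) : ℝ := h0 * Real.exp (τ * t) / Real.cos (f * t)

/-! The velocity is affine in space and the height is uniform in space, so every spatial
derivative is explicit. In time, `tan (f t)` has derivative `f (1 + tan² (f t))` and
`h` has logarithmic derivative `τ + f tan (f t)`, which is minus the divergence
`∂u/∂x + ∂v/∂y`. After substitution, each equation is a polynomial identity in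
`tan (f t)`. -/

open Real

lemma cos_mul_pos_of_mem_Ico {f t : ℝ} (hf : 0 < f) (ht : t ∈ Set.Ico 0 (π / (2 * f))) :
    0 < cos (f * t) := by
  have hft : f * t < π / 2 := by
    calc f * t < f * (π / (2 * f)) := mul_lt_mul_of_pos_left ht.2 hf
      _ = π / 2 := by field_simp
  apply cos_pos_of_mem_Ioo
  constructor <;> nlinarith [pi_pos, ht.1]

lemma hasDerivAt_tan_const_mul {a t : ℝ} (h : cos (a * t) ≠ 0) :
    HasDerivAt (fun s => tan (a * s)) (a * (1 + tan (a * t) ^ 2)) t := by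
  refine ((hasDerivAt_tan h).comp t ((hasDerivAt_id t).const_mul a)).congr_deriv ?_
  rw [← inv_one_add_tan_sq h]
  simp [mul_comm]

section Fields

variable (f τ h0 x y t : ℝ)

lemma hasDerivAt_u5_x : HasDerivAt (fun s => u5 f τ s y t) (-τ) x := by
  simpa [u5] using ((hasDerivAt_id x).const_mul τ).const_sub (f * y)

lemma hasDerivAt_u5_y : HasDerivAt (fun s => u5 f τ x s t) f y := by
  simpa [u5] using ((hasDerivAt_id y).const_mul f).sub_const (τ * x)

lemma hasDerivAt_v5_x : HasDerivAt (fun s => v5 f τ s y t) (τ * tan (f * t)) x := by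
  simpa [v5] using (((hasDerivAt_id x).const_mul τ).sub_const (f * y)).mul_const (tan (f * t))

lemma hasDerivAt_v5_y : HasDerivAt (fun s => v5 f τ x s t) (-f * tan (f * t)) y := by
  simpa [v5] using (((hasDerivAt_id y).const_mul f).const_sub (τ * x)).mul_const (tan (f * t))

lemma hasDerivAt_v5_t (h : cos (f * t) ≠ 0) :
    HasDerivAt (fun s => v5 f τ x y s) ((τ * x - f * y) * (f * (1 + tan (f * t) ^ 2))) t :=
  (hasDerivAt_tan_const_mul h).const_mul _

lemma hasDerivAt_h5_t (h : cos (f * t) ≠ 0) :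
    HasDerivAt (fun s => h5 f τ h0 x y s) ((τ + f * tan (f * t)) * h5 f τ h0 x y t) t := by
  have hexp := ((hasDerivAt_id t).const_mul τ).exp.const_mul h0
  have hcos := ((hasDerivAt_id t).const_mul f).cos
  refine (hexp.div hcos h).congr_deriv ?_
  simp only [h5, tan_eq_sin_div_cos, id, mul_one]
  generalize cos (f * t) = c at h ⊢
  field_simp
  ring

end Fields

theorem stmt_5_general (f τ F h0 : ℝ) (hf : 0 < f) :
    ∀ x y : ℝ, ∀ t ∈ Set.Ico (0 : ℝ) (Real.pi / (2 * f)),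
      (deriv (fun s => u5 f τ x y s) t
        + u5 f τ x y t * deriv (fun s => u5 f τ s y t) x
        + v5 f τ x y t * deriv (fun s => u5 f τ x s t) y
        + (1 / F ^ 2) * deriv (fun s => h5 f τ h0 s y t) x
        - f * v5 f τ x y t + τ * u5 f τ x y t = 0) ∧
      (deriv (fun s => v5 f τ x y s) t
        + u5 f τ x y t * deriv (fun s => v5 f τ s y t) x
        + v5 f τ x y t * deriv (fun s => v5 f τ x s t) y
        + (1 / F ^ 2) * deriv (fun s => h5 f τ h0 x s t) y
        + f * u5 f τ x y t + τ * v5 f τ x y t = 0) ∧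
      (deriv (fun s => h5 f τ h0 x y s) t
        + deriv (fun s => u5 f τ s y t * h5 f τ h0 s y t) x
        + deriv (fun s => v5 f τ x s t * h5 f τ h0 x s t) y = 0) := by
  intro x y t ht
  have hcos := (cos_mul_pos_of_mem_Ico hf ht).ne'
  have hu_t : deriv (fun s => u5 f τ x y s) t = 0 := deriv_const t _
  have hh_x : deriv (fun s => h5 f τ h0 s y t) x = 0 := deriv_const x _
  have hh_y : deriv (fun s => h5 f τ h0 x s t) y = 0 := deriv_const y _
  have huh_x : deriv (fun s => u5 f τ s y t * h5 f τ h0 s y t) x = -τ * h5 f τ h0 x y t :=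
    ((hasDerivAt_u5_x f τ x y t).mul_const _).deriv
  have hvh_y : deriv (fun s => v5 f τ x s t * h5 f τ h0 x s t) y
      = -f * tan (f * t) * h5 f τ h0 x y t :=
    ((hasDerivAt_v5_y f τ x y t).mul_const _).deriv
  rw [hu_t, hh_x, hh_y, huh_x, hvh_y, (hasDerivAt_u5_x f τ x y t).deriv,
    (hasDerivAt_u5_y f τ x y t).deriv, (hasDerivAt_v5_x f τ x y t).deriv,
    (hasDerivAt_v5_y f τ x y t).deriv, (hasDerivAt_v5_t f τ x y t hcos).deriv,
    (hasDerivAt_h5_t f τ h0 x y t hcos).deriv]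
  refine ⟨?_, ?_, ?_⟩
  · simp only [u5, v5]
    ring
  · simp only [u5, v5]
    ring
  · ring

theorem stmt_5 (f τ F h0 : ℝ) (hf : 0 < f) (hτ : 0 ≤ τ) (hF : F ≠ 0) :
    ∀ x y : ℝ, ∀ t ∈ Set.Ico (0 : ℝ) (Real.pi / (2 * f)),
      (deriv (fun s => u5 f τ x y s) t
        + u5 f τ x y t * deriv (fun s => u5 f τ s y t) x
        + v5 f τ x y t * deriv (fun s => u5 f τ x s t) y
        + (1 / F ^ 2) * deriv (fun s => h5 f τ h0 s y t) x
        - f * v5 f τ x y t + τ * u5 f τ x y t = 0) ∧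
      (deriv (fun s => v5 f τ x y s) t
        + u5 f τ x y t * deriv (fun s => v5 f τ s y t) x
        + v5 f τ x y t * deriv (fun s => v5 f τ x s t) y
        + (1 / F ^ 2) * deriv (fun s => h5 f τ h0 x s t) y
        + f * u5 f τ x y t + τ * v5 f τ x y t = 0) ∧
      (deriv (fun s => h5 f τ h0 x y s) t
        + deriv (fun s => u5 f τ s y t * h5 f τ h0 s y t) x
        + deriv (fun s => v5 f τ x s t * h5 f τ h0 x s t) y = 0) :=
  stmt_5_general f τ F h0 hf
end

section
/- On the interval [0, π/(2f)), the functions u(x,y,t) = -(f x + τ y) tan(ft), v(x,y,t) = -f x - τ y, h(x,y,t) = h₀ e^{τt} sec(ft) satisfy the rotating shallow water equations over a flat bottom with linear friction coefficient τ, Coriolis parameter f, and Froude number F. -/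
noncomputable def u6 (f τ : ℝ) (x y t : ℝ) : ℝ := -(f * x + τ * y) * Real.tan (f * t)
noncomputable def v6 (f τ : ℝ) (x y t : ℝ) : ℝ := -f * x - τ * y
noncomputable def h6 (f τ h0 : ℝ) (x y t : ℝ) : ℝ := h0 * Real.exp (τ * t) / Real.cos (f * t)

/-!
Write `g = -(f x + τ y)`, so that `v = g` and `u = g tan (f t)`. The velocity field is affine in
`(x, y)` and `h` is spatially constant, so each equation reduces to an identity in `tan (f t)`:
the `u`-equation is `tan' = f (1 + tan²)`, the `v`-equation cancels termwise, and the continuity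
equation holds because `h_t / h = τ + f tan (f t)` is exactly `-(u_x + v_y)`. The interval
`[0, π/(2f))` is where `cos (f t) > 0`, i.e. before the blow-up of `tan (f t)`.
-/

open Real

lemma hasDerivAt_tan_mul {f t : ℝ} (hc : cos (f * t) ≠ 0) :
    HasDerivAt (fun s => tan (f * s)) (f * (1 + tan (f * t) ^ 2)) t := by
  have h : HasDerivAt (fun s => tan (f * s)) (1 / cos (f * t) ^ 2 * f) t :=
    (hasDerivAt_tan hc).comp t (hasDerivAt_const_mul f)
  rwa [one_div, ← inv_one_add_tan_sq hc, inv_inv, mul_comm] at h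

lemma hasDerivAt_exp_mul_div_cos_mul {a τ f t : ℝ} (hc : cos (f * t) ≠ 0) :
    HasDerivAt (fun s => a * exp (τ * s) / cos (f * s))
      (a * exp (τ * t) / cos (f * t) * (τ + f * tan (f * t))) t := by
  have hnum : HasDerivAt (fun s => a * exp (τ * s)) (a * (exp (τ * t) * τ)) t :=
    ((hasDerivAt_exp _).comp t (hasDerivAt_const_mul τ)).const_mul a
  have hden : HasDerivAt (fun s => cos (f * s)) (-sin (f * t) * f) t :=
    (hasDerivAt_cos _).comp t (hasDerivAt_const_mul f)
  refine (hnum.div hden hc).congr_deriv ?_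
  rw [tan_eq_sin_div_cos]
  generalize cos (f * t) = c at hc ⊢
  field_simp
  ring

section Derivatives

variable {f τ h0 x y t : ℝ}

lemma deriv_u6_time (hc : cos (f * t) ≠ 0) :
    deriv (fun s => u6 f τ x y s) t = -(f * x + τ * y) * (f * (1 + tan (f * t) ^ 2)) :=
  ((hasDerivAt_tan_mul hc).const_mul _).deriv

lemma deriv_u6_x : deriv (fun s => u6 f τ s y t) x = -f * tan (f * t) := by
  simp [u6]

lemma deriv_u6_y : deriv (fun s => u6 f τ x s t) y = -τ * tan (f * t) := by
  simp [u6]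

lemma deriv_v6_time : deriv (fun s => v6 f τ x y s) t = 0 := by
  simp [v6]

lemma deriv_v6_x : deriv (fun s => v6 f τ s y t) x = -f := by
  simp [v6]

lemma deriv_v6_y : deriv (fun s => v6 f τ x s t) y = -τ := by
  simp [v6]

lemma deriv_h6_x : deriv (fun s => h6 f τ h0 s y t) x = 0 := by
  simp [h6]

lemma deriv_h6_y : deriv (fun s => h6 f τ h0 x s t) y = 0 := by
  simp [h6]

lemma deriv_h6_time (hc : cos (f * t) ≠ 0) :
    deriv (fun s => h6 f τ h0 x y s) t = h6 f τ h0 x y t * (τ + f * tan (f * t)) :=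
  (hasDerivAt_exp_mul_div_cos_mul hc).deriv

lemma deriv_u6_mul_h6_x :
    deriv (fun s => u6 f τ s y t * h6 f τ h0 s y t) x = -f * tan (f * t) * h6 f τ h0 x y t := by
  simp [u6, h6]

lemma deriv_v6_mul_h6_y :
    deriv (fun s => v6 f τ x s t * h6 f τ h0 x s t) y = -τ * h6 f τ h0 x y t := by
  simp [v6, h6]

end Derivatives

theorem stmt_6_general (f τ F h0 : ℝ) (hf : 0 < f) :
    ∀ x y : ℝ, ∀ t ∈ Set.Ico (0 : ℝ) (Real.pi / (2 * f)),
      (deriv (fun s => u6 f τ x y s) t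
        + u6 f τ x y t * deriv (fun s => u6 f τ s y t) x
        + v6 f τ x y t * deriv (fun s => u6 f τ x s t) y
        + (1 / F ^ 2) * deriv (fun s => h6 f τ h0 s y t) x
        - f * v6 f τ x y t + τ * u6 f τ x y t = 0) ∧
      (deriv (fun s => v6 f τ x y s) t
        + u6 f τ x y t * deriv (fun s => v6 f τ s y t) x
        + v6 f τ x y t * deriv (fun s => v6 f τ x s t) y
        + (1 / F ^ 2) * deriv (fun s => h6 f τ h0 x s t) y
        + f * u6 f τ x y t + τ * v6 f τ x y t = 0) ∧
      (deriv (fun s => h6 f τ h0 x y s) t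
        + deriv (fun s => u6 f τ s y t * h6 f τ h0 s y t) x
        + deriv (fun s => v6 f τ x s t * h6 f τ h0 x s t) y = 0) := by
  intro x y t ht
  have hc := (cos_mul_pos_of_mem_Ico hf ht).ne'
  refine ⟨?_, ?_, ?_⟩
  · rw [deriv_u6_time hc, deriv_u6_x, deriv_u6_y, deriv_h6_x]
    simp only [u6, v6]
    ring
  · rw [deriv_v6_time, deriv_v6_x, deriv_v6_y, deriv_h6_y]
    simp only [u6, v6]
    ring
  · rw [deriv_h6_time hc, deriv_u6_mul_h6_x, deriv_v6_mul_h6_y]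
    ring

theorem stmt_6 (f τ F h0 : ℝ) (hf : 0 < f) (hτ : 0 ≤ τ) (hF : F ≠ 0) :
    ∀ x y : ℝ, ∀ t ∈ Set.Ico (0 : ℝ) (Real.pi / (2 * f)),
      (deriv (fun s => u6 f τ x y s) t
        + u6 f τ x y t * deriv (fun s => u6 f τ s y t) x
        + v6 f τ x y t * deriv (fun s => u6 f τ x s t) y
        + (1 / F ^ 2) * deriv (fun s => h6 f τ h0 s y t) x
        - f * v6 f τ x y t + τ * u6 f τ x y t = 0) ∧
      (deriv (fun s => v6 f τ x y s) t
        + u6 f τ x y t * deriv (fun s => v6 f τ s y t) x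
        + v6 f τ x y t * deriv (fun s => v6 f τ x s t) y
        + (1 / F ^ 2) * deriv (fun s => h6 f τ h0 x s t) y
        + f * u6 f τ x y t + τ * v6 f τ x y t = 0) ∧
      (deriv (fun s => h6 f τ h0 x y s) t
        + deriv (fun s => u6 f τ s y t * h6 f τ h0 s y t) x
        + deriv (fun s => v6 f τ x s t * h6 f τ h0 x s t) y = 0) :=
  stmt_6_general f τ F h0 hf
end

section
/- The time-independent velocity field u(x,y,t) = f y - τ x, v(x,y,t) = -f x - τ y together with h(x,y,t) = h₀ e^{2τt} satisfies the rotating shallow water equations over a flat bottom with Coriolis parameter f, friction coefficient τ, and Froude number F, for all t ≥ 0; in particular the free surface height grows exponentially at rate 2τ. -/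
noncomputable def u7 (f τ : ℝ) (x y t : ℝ) : ℝ := f * y - τ * x
noncomputable def v7 (f τ : ℝ) (x y t : ℝ) : ℝ := -f * x - τ * y
noncomputable def h7 (τ h0 : ℝ) (x y t : ℝ) : ℝ := h0 * Real.exp (2 * τ * t)

theorem stmt_7 (f τ F h0 : ℝ) (hF : F ≠ 0) :
    ∀ x y : ℝ, ∀ t : ℝ, 0 ≤ t →
      (deriv (fun s => u7 f τ x y s) t
        + u7 f τ x y t * deriv (fun s => u7 f τ s y t) x
        + v7 f τ x y t * deriv (fun s => u7 f τ x s t) y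
        + (1 / F ^ 2) * deriv (fun s => h7 τ h0 s y t) x
        - f * v7 f τ x y t + τ * u7 f τ x y t = 0) ∧
      (deriv (fun s => v7 f τ x y s) t
        + u7 f τ x y t * deriv (fun s => v7 f τ s y t) x
        + v7 f τ x y t * deriv (fun s => v7 f τ x s t) y
        + (1 / F ^ 2) * deriv (fun s => h7 τ h0 x s t) y
        + f * u7 f τ x y t + τ * v7 f τ x y t = 0) ∧
      (deriv (fun s => h7 τ h0 x y s) t
        + deriv (fun s => u7 f τ s y t * h7 τ h0 s y t) x
        + deriv (fun s => v7 f τ x s t * h7 τ h0 x s t) y = 0) := by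
  intro x y t _
  simp only [u7, v7, h7]
  have e1 : deriv (fun s : ℝ => f * y - τ * s) x = -τ := by
    simpa using (((hasDerivAt_id x).const_mul τ).const_sub (f * y)).deriv
  have e2 : deriv (fun s : ℝ => -f * x - τ * s) y = -τ := by
    simpa using (((hasDerivAt_id y).const_mul τ).const_sub (-f * x)).deriv
  have e3 : deriv (fun s : ℝ => h0 * Real.exp (2 * τ * t)) x = 0 := deriv_const _ _
  have e4 : deriv (fun s : ℝ => h0 * Real.exp (2 * τ * t)) y = 0 := deriv_const _ _
  have e5 : deriv (fun s : ℝ => h0 * Real.exp (2 * τ * s)) t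
      = h0 * (2 * τ * Real.exp (2 * τ * t)) := by
    have : HasDerivAt (fun s : ℝ => h0 * Real.exp (2 * τ * s))
        (h0 * (Real.exp (2 * τ * t) * (2 * τ))) t := by
      simpa using ((((hasDerivAt_id t).const_mul (2 * τ)).exp).const_mul h0)
    simpa [mul_comm, mul_left_comm, mul_assoc] using this.deriv
  have e6 : deriv (fun s : ℝ => (f * y - τ * s) * (h0 * Real.exp (2 * τ * t))) x
      = -τ * (h0 * Real.exp (2 * τ * t)) := by
    have : HasDerivAt (fun s : ℝ => (f * y - τ * s) * (h0 * Real.exp (2 * τ * t)))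
        (-τ * (h0 * Real.exp (2 * τ * t))) x := by
      have h := (((hasDerivAt_id x).const_mul τ).const_sub (f * y)).mul_const
        (h0 * Real.exp (2 * τ * t))
      simpa using h
    exact this.deriv
  have e7 : deriv (fun s : ℝ => (-f * x - τ * s) * (h0 * Real.exp (2 * τ * t))) y
      = -τ * (h0 * Real.exp (2 * τ * t)) := by
    have : HasDerivAt (fun s : ℝ => (-f * x - τ * s) * (h0 * Real.exp (2 * τ * t)))
        (-τ * (h0 * Real.exp (2 * τ * t))) y := by
      have h := (((hasDerivAt_id y).const_mul τ).const_sub (-f * x)).mul_const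
        (h0 * Real.exp (2 * τ * t))
      simpa using h
    exact this.deriv
  have e8 : deriv (fun s : ℝ => f * s - τ * x) y = f := by
    simpa using (((hasDerivAt_id y).const_mul f).sub_const (τ * x)).deriv
  have e9 : deriv (fun s : ℝ => -f * s - τ * y) x = -f := by
    simpa using (((hasDerivAt_id x).const_mul (-f)).sub_const (τ * y)).deriv
  have eu : deriv (fun s : ℝ => f * y - τ * x) t = 0 := deriv_const _ _
  have ev : deriv (fun s : ℝ => -f * x - τ * y) t = 0 := deriv_const _ _
  refine ⟨?_, ?_, ?_⟩
  · rw [eu, e1, e8, e3]; ring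
  · rw [ev, e9, e2, e4]; ring
  · rw [e5, e6, e7]; ring
end
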